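/- arXiv:2408.10900 — 3 statements merged into one kernel-verified Lean document; each statement's English description precedes it below -/
import Mathlib

section
/- Let T be a real number with T > e² and let N be a positive real number. Then the function f(α) = T^(α·T·N)/(1 + 2·α·T)^N is strictly monotonically increasing on [0, ∞). Since f(0) = 1, f(α) > 1 for all α > 0. -/
lemma stmt_4_aux (T N : ℝ) (hT : Real.exp 2 < T) (hN : 0 < N) :
    StrictMonoOn (fun α : ℝ => α * T * N * Real.log T - N * Real.log (1 + 2 * α * T))
      (Set.Ici (0 : ℝ)) := by
  have hTpos : 0 < T := lt_trans (Real.exp_pos 2) hT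
  have hlogT : 2 < Real.log T := by
    have := Real.log_lt_log (Real.exp_pos 2) hT
    rwa [Real.log_exp] at this
  apply StrictMonoOn.mono (s := Set.Ici (0 : ℝ))
    (strictMonoOn_of_deriv_pos (convex_Ici 0) ?_ ?_) le_rfl
  · apply ContinuousOn.sub
    · fun_prop
    · apply ContinuousOn.mul continuousOn_const
      apply ContinuousOn.log (by fun_prop)
      intro x hx
      have hx0 : (0:ℝ) ≤ x := hx
      nlinarith
  · intro x hx
    rw [interior_Ici] at hx
    have hxpos : 0 < x := hx
    have harg : (0:ℝ) < 1 + 2 * x * T := by nlinarith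
    have h1 : HasDerivAt (fun α : ℝ => α * T * N * Real.log T)
        (T * N * Real.log T) x := by
      simpa using (((hasDerivAt_id x).mul_const T).mul_const N).mul_const (Real.log T)
    have h2 : HasDerivAt (fun α : ℝ => 1 + 2 * α * T) (2 * T) x := by
      simpa using (((hasDerivAt_id x).const_mul 2).mul_const T).const_add 1
    have h3 : HasDerivAt (fun α : ℝ => Real.log (1 + 2 * α * T))
        (2 * T / (1 + 2 * x * T)) x := h2.log (ne_of_gt harg)
    have hd : HasDerivAt (fun α : ℝ => α * T * N * Real.log T - N * Real.log (1 + 2 * α * T))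
        (T * N * Real.log T - N * (2 * T / (1 + 2 * x * T))) x := h1.sub (h3.const_mul N)
    rw [hd.deriv]
    have hdiv : 2 * T / (1 + 2 * x * T) < 2 * T :=
      div_lt_self (by positivity) (by nlinarith)
    have h4 : N * (2 * T / (1 + 2 * x * T)) < N * (2 * T) :=
      (mul_lt_mul_iff_right₀ hN).2 hdiv
    have h5 : T * N * 2 < T * N * Real.log T :=
      (mul_lt_mul_iff_right₀ (mul_pos hTpos hN)).2 hlogT
    nlinarith [h4, h5]

/-- For a real `T > e²` and a positive real `N`, the perturbation space ratio
`f(α) = T^(αTN)/(1 + 2αT)^N` is strictly increasing on `[0, ∞)`; since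
`f(0) = 1`, it satisfies `f(α) > 1` for all `α > 0`. -/
theorem stmt_4 (T N : ℝ) (hT : Real.exp 2 < T) (hN : 0 < N) :
    StrictMonoOn (fun α : ℝ => T ^ (α * T * N) / (1 + 2 * α * T) ^ N)
        (Set.Ici (0 : ℝ)) ∧
      T ^ ((0 : ℝ) * T * N) / (1 + 2 * (0 : ℝ) * T) ^ N = 1 ∧
      ∀ α : ℝ, 0 < α → 1 < T ^ (α * T * N) / (1 + 2 * α * T) ^ N := by
  have hTpos : 0 < T := lt_trans (Real.exp_pos 2) hT
  have key : ∀ α : ℝ, 0 ≤ α →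
      T ^ (α * T * N) / (1 + 2 * α * T) ^ N
        = Real.exp (α * T * N * Real.log T - N * Real.log (1 + 2 * α * T)) := by
    intro α hα
    have harg : (0:ℝ) < 1 + 2 * α * T := by nlinarith
    rw [Real.rpow_def_of_pos hTpos, Real.rpow_def_of_pos harg, ← Real.exp_sub]
    ring_nf
  have hmono : StrictMonoOn (fun α : ℝ => T ^ (α * T * N) / (1 + 2 * α * T) ^ N)
      (Set.Ici (0 : ℝ)) := by
    intro a ha b hb hab
    simp only
    rw [key a ha, key b hb]
    exact Real.exp_lt_exp.2 (stmt_4_aux T N hT hN ha hb hab)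
  have hzero : T ^ ((0 : ℝ) * T * N) / (1 + 2 * (0 : ℝ) * T) ^ N = 1 := by
    norm_num
  refine ⟨hmono, hzero, fun α hα => ?_⟩
  have := hmono (Set.self_mem_Ici) (Set.mem_Ici.2 hα.le) hα
  simpa [hzero] using this
end

section
/- Let N be a positive integer and Δ a natural number. The set { δ : Fin N → ℤ | ∑_{n=0}^{N−1} |δ(n)| ≤ Δ } (the L1 ball of radius Δ in ℤ^N) is finite and its cardinality is at most C(N + Δ − 1, Δ) · (1 + 2·Δ/N)^N, where C denotes the binomial coefficient and the right-hand side is taken as a real number. -/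
/-!
Every point `δ` of the integer L1 ball of radius `Δ` lies in a box `∏ i, [-m i, m i]` with
`∑ i, m i = Δ` exactly: take `m i = |δ i|` and put the slack into one coordinate. There are
`C(N + Δ - 1, Δ)` such `m` (multisets of size `Δ` on `N` letters), and by AM-GM each box has
`∏ i, (2 m i + 1) ≤ (1 + 2Δ/N)^N` points.
-/

open Finset

theorem Real.prod_le_mean_pow {ι : Type*} (s : Finset ι) (z : ι → ℝ) (hz : ∀ i ∈ s, 0 ≤ z i) :
    ∏ i ∈ s, z i ≤ ((∑ i ∈ s, z i) / #s) ^ #s := by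
  rcases s.eq_empty_or_nonempty with rfl | hs
  · simp
  have hcard : (0 : ℝ) < #s := by exact_mod_cast hs.card_pos
  have hprod : 0 ≤ ∏ i ∈ s, z i := prod_nonneg hz
  have amgm := Real.geom_mean_le_arith_mean_weighted s (fun _ => (#s : ℝ)⁻¹) z
    (fun _ _ => by positivity) (by simp [hcard.ne']) hz
  rw [Real.finsetProd_rpow s z hz, ← mul_sum, inv_mul_eq_div] at amgm
  calc ∏ i ∈ s, z i = ((∏ i ∈ s, z i) ^ (#s : ℝ)⁻¹) ^ #s := by
        rw [← Real.rpow_natCast, ← Real.rpow_mul hprod, inv_mul_cancel₀ hcard.ne', Real.rpow_one]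
    _ ≤ ((∑ i ∈ s, z i) / #s) ^ #s := by gcongr

theorem Finset.card_piAntidiag_univ {ι : Type*} [Fintype ι] [DecidableEq ι] (n : ℕ) :
    #(piAntidiag (univ : Finset ι) n) = (Fintype.card ι + n - 1).choose n := by
  rw [← map_sym_eq_piAntidiag, card_map, sym_univ, card_univ, Sym.card_sym_eq_choose]

theorem Finset.exists_mem_piAntidiag_univ_le {ι : Type*} [Fintype ι] [DecidableEq ι] [Nonempty ι]
    {f : ι → ℕ} {n : ℕ} (hf : ∑ i, f i ≤ n) : ∃ g ∈ piAntidiag univ n, f ≤ g := by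
  obtain ⟨i₀⟩ := ‹Nonempty ι›
  refine ⟨f + Pi.single i₀ (n - ∑ i, f i), ?_, fun i => by simp⟩
  simp [sum_add_distrib, hf]

theorem Int.card_Icc_neg_self (m : ℕ) : #(Icc (-(m : ℤ)) m) = 2 * m + 1 := by
  rw [Int.card_Icc]; omega

section IntegerBall

variable {ι : Type*} [Fintype ι] [DecidableEq ι]

noncomputable def intBox (m : ι → ℕ) : Finset (ι → ℤ) :=
  Fintype.piFinset fun i => Icc (-(m i : ℤ)) (m i)

theorem mem_intBox {m : ι → ℕ} {δ : ι → ℤ} : δ ∈ intBox m ↔ ∀ i, |δ i| ≤ m i := by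
  simp [intBox, abs_le]

theorem card_intBox (m : ι → ℕ) : #(intBox m) = ∏ i, (2 * m i + 1) := by
  simp only [intBox, Fintype.card_piFinset, Int.card_Icc_neg_self]

theorem card_intBox_le_of_sum_eq [Nonempty ι] {m : ι → ℕ} {Δ : ℕ} (hm : ∑ i, m i = Δ) :
    (#(intBox m) : ℝ) ≤ (1 + 2 * (Δ : ℝ) / Fintype.card ι) ^ Fintype.card ι := by
  have hsum : ∑ i, (2 * (m i : ℝ) + 1) = 2 * Δ + Fintype.card ι := by
    simp [sum_add_distrib, ← mul_sum, ← hm]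
  calc (#(intBox m) : ℝ) = ∏ i, (2 * (m i : ℝ) + 1) := by simp [card_intBox]
    _ ≤ ((∑ i, (2 * (m i : ℝ) + 1)) / #(univ : Finset ι)) ^ #(univ : Finset ι) :=
        Real.prod_le_mean_pow _ _ fun i _ => by positivity
    _ = (1 + 2 * (Δ : ℝ) / Fintype.card ι) ^ Fintype.card ι := by
        rw [hsum, card_univ]; field_simp; ring

theorem setOf_sum_abs_le_subset_biUnion_intBox [Nonempty ι] (Δ : ℕ) :
    {δ : ι → ℤ | ∑ i, |δ i| ≤ (Δ : ℤ)} ⊆ ((piAntidiag univ Δ).biUnion intBox : Finset (ι → ℤ)) := by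
  intro δ hδ
  have hnatAbs : ∑ i, (δ i).natAbs ≤ Δ := by
    have : ((∑ i, (δ i).natAbs : ℕ) : ℤ) ≤ Δ := by push_cast [Int.natCast_natAbs]; exact hδ
    exact_mod_cast this
  obtain ⟨m, hm, hle⟩ := exists_mem_piAntidiag_univ_le hnatAbs
  simp only [coe_biUnion, Set.mem_iUnion, mem_coe]
  exact ⟨m, hm, mem_intBox.2 fun i => by rw [← Int.natCast_natAbs]; exact_mod_cast hle i⟩

theorem setOf_sum_abs_le_finite_and_ncard_le [Nonempty ι] (Δ : ℕ) :
    {δ : ι → ℤ | ∑ i, |δ i| ≤ (Δ : ℤ)}.Finite ∧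
      ({δ : ι → ℤ | ∑ i, |δ i| ≤ (Δ : ℤ)}.ncard : ℝ) ≤
        ((Fintype.card ι + Δ - 1).choose Δ : ℝ) *
          (1 + 2 * (Δ : ℝ) / Fintype.card ι) ^ Fintype.card ι := by
  have hsub := setOf_sum_abs_le_subset_biUnion_intBox (ι := ι) Δ
  refine ⟨(finite_toSet _).subset hsub, ?_⟩
  calc ({δ : ι → ℤ | ∑ i, |δ i| ≤ (Δ : ℤ)}.ncard : ℝ)
      ≤ #((piAntidiag univ Δ).biUnion intBox) := by
        exact_mod_cast (Set.ncard_le_ncard hsub (finite_toSet _)).trans_eq (Set.ncard_coe_finset _)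
    _ ≤ ∑ m ∈ piAntidiag univ Δ, (#(intBox m) : ℝ) := by exact_mod_cast card_biUnion_le
    _ ≤ ∑ _m ∈ piAntidiag (univ : Finset ι) Δ,
          (1 + 2 * (Δ : ℝ) / Fintype.card ι) ^ Fintype.card ι :=
        sum_le_sum fun m hm => card_intBox_le_of_sum_eq (mem_piAntidiag.1 hm).1
    _ = _ := by rw [sum_const, card_piAntidiag_univ, nsmul_eq_mul]

end IntegerBall

/-- The integer L1 ball `{δ : Fin N → ℤ | ∑ n, |δ n| ≤ Δ}` is finite, and its
cardinality is at most `C(N + Δ − 1, Δ) · (1 + 2Δ/N)^N` (as a real number). -/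
theorem stmt_9 (N : ℕ) (hN : 0 < N) (Δ : ℕ) :
    {δ : Fin N → ℤ | ∑ n, |δ n| ≤ (Δ : ℤ)}.Finite ∧
      ({δ : Fin N → ℤ | ∑ n, |δ n| ≤ (Δ : ℤ)}.ncard : ℝ) ≤
        ((N + Δ - 1).choose Δ : ℝ) * (1 + 2 * (Δ : ℝ) / N) ^ N := by
  have : Nonempty (Fin N) := ⟨⟨0, hN⟩⟩
  simpa using setOf_sum_abs_le_finite_and_ncard_le (ι := Fin N) Δ
end

section
/- Let N be a positive integer, Δ a natural number, and s : Fin N → ℕ a vector of spike times. The temporal Δ-perturbation set ε(s, Δ) = { s̃ : Fin N → ℕ | ∑_{n=0}^{N−1} |(s̃(n) : ℤ) − (s(n) : ℤ)| ≤ Δ } is finite and its cardinality is at most C(N + Δ − 1, Δ) · (1 + 2·Δ/N)^N (as a real-number bound), where C denotes the binomial coefficient. In particular, this bound is independent of the number of time steps T. -/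
/-!
Translating by `s` embeds the perturbation set into the integer ℓ¹-ball of radius `Δ`. A point `d`
of the ball is determined by its sign vector `σ ∈ {-1, 0, 1}^N` and the prefix sums of `|d|` at the
`k` coordinates where `σ ≠ 0`; these form a `k`-subset of `{1, …, Δ}`, so the ball has at most
`∑_σ C(Δ, k(σ))` points. Comparing `k! C(Δ, k) ≤ Δ^k` with `N^k ≤ k! C(N + k - 1, k)` gives
`C(Δ, k) ≤ C(N + Δ - 1, Δ) (Δ/N)^k`, and `∑_σ x^{k(σ)} = (1 + 2x)^N`.
-/

open Finset Function

theorem Finset.eqOn_of_strictMonoOn_of_image_eq {α β : Type*} [LinearOrder α] [LinearOrder β]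
    {s : Finset α} {f g : α → β} (hf : StrictMonoOn f s) (hg : StrictMonoOn g s)
    (h : s.image f = s.image g) : Set.EqOn f g s := by
  have hcard : #(s.image f) = #s := card_image_of_injOn hf.injOn
  have enum {φ : α → β} (hφ : StrictMonoOn φ s) (himg : s.image φ = s.image f) :
      φ ∘ s.orderEmbOfFin rfl = (s.image f).orderEmbOfFin hcard :=
    orderEmbOfFin_unique hcard
      (fun i => himg ▸ mem_image_of_mem _ (orderEmbOfFin_mem s rfl i))
      (fun i j hij => hφ (orderEmbOfFin_mem s rfl i) (orderEmbOfFin_mem s rfl j)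
        ((s.orderEmbOfFin rfl).strictMono hij))
  intro x hx
  obtain ⟨i, rfl⟩ : x ∈ Set.range (s.orderEmbOfFin rfl) := by
    rwa [range_orderEmbOfFin]
  exact congrFun ((enum hf rfl).trans (enum hg h.symm).symm) i

theorem injective_sub_natCast {ι : Type*} (s : ι → ℕ) :
    Injective fun (t : ι → ℕ) i => (t i : ℤ) - s i :=
  fun _ _ h => funext fun i => by simpa using congrFun h i

variable {ι : Type*} [Fintype ι]

section PrefixSum

variable [LinearOrder ι]

def prefixSum (a : ι → ℕ) (i : ι) : ℕ := ∑ j with j ≤ i, a j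

theorem prefixSum_eq_sum_lt_add (a : ι → ℕ) (i : ι) :
    prefixSum a i = (∑ j with j < i, a j) + a i := by
  have : univ.filter (· ≤ i) = insert i (univ.filter (· < i)) := by
    ext j
    simp [le_iff_lt_or_eq, or_comm]
  rw [prefixSum, this, sum_insert (by simp), add_comm]

theorem prefixSum_le_sum (a : ι → ℕ) (i : ι) : prefixSum a i ≤ ∑ j, a j :=
  sum_le_sum_of_subset (filter_subset _ _)

theorem prefixSum_strictMonoOn (a : ι → ℕ) : StrictMonoOn (prefixSum a) (support a) := by
  intro i _ j hj hij
  calc prefixSum a i ≤ ∑ k with k < j, a k :=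
        sum_le_sum_of_subset fun k => by simpa using fun hk : k ≤ i => hk.trans_lt hij
    _ < prefixSum a j := by
        rw [prefixSum_eq_sum_lt_add]
        exact Nat.lt_add_of_pos_right (Nat.pos_of_ne_zero hj)

theorem eq_of_support_eq_of_eqOn_prefixSum {a b : ι → ℕ} (hab : support a = support b)
    (h : Set.EqOn (prefixSum a) (prefixSum b) (support a)) : a = b := by
  funext i
  induction i using WellFoundedLT.induction with
  | ind i ih =>
    by_cases hi : a i = 0
    · have : b i = 0 := by rwa [← notMem_support, ← hab, notMem_support]
      rw [hi, this]
    · have hlt : ∑ j with j < i, a j = ∑ j with j < i, b j :=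
        sum_congr rfl fun j hj => ih j (mem_filter.1 hj).2
      have hi' := h hi
      rw [prefixSum_eq_sum_lt_add, prefixSum_eq_sum_lt_add, hlt] at hi'
      omega

theorem image_prefixSum_mem_powersetCard {a : ι → ℕ} {T : Finset ι} {Δ : ℕ}
    (hsupp : support a = T) (hsum : ∑ i, a i ≤ Δ) :
    T.image (prefixSum a) ∈ (Icc 1 Δ).powersetCard #T := by
  have hinj : Set.InjOn (prefixSum a) T := hsupp ▸ (prefixSum_strictMonoOn a).injOn
  refine mem_powersetCard.2 ⟨fun x hx => ?_, card_image_of_injOn hinj⟩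
  obtain ⟨i, hi, rfl⟩ := mem_image.1 hx
  have hai : a i ≠ 0 := by rwa [← mem_support, hsupp]
  have hle := prefixSum_le_sum a i
  have hsplit := prefixSum_eq_sum_lt_add a i
  rw [mem_Icc]
  omega

theorem ncard_support_eq_sum_le_le_choose (T : Finset ι) (Δ : ℕ) :
    {a : ι → ℕ | support a = T ∧ ∑ i, a i ≤ Δ}.ncard ≤ Δ.choose #T := by
  calc _ ≤ ((Icc 1 Δ).powersetCard #T : Set (Finset ℕ)).ncard := by
        refine Set.ncard_le_ncard_of_injOn (fun a => T.image (prefixSum a))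
          (fun a ha => image_prefixSum_mem_powersetCard ha.1 ha.2) ?_ (Set.toFinite _)
        rintro a ⟨ha, -⟩ b ⟨hb, -⟩ himg
        refine eq_of_support_eq_of_eqOn_prefixSum (ha.trans hb.symm) ?_
        rw [ha]
        exact eqOn_of_strictMonoOn_of_image_eq (ha ▸ prefixSum_strictMonoOn a)
          (hb ▸ prefixSum_strictMonoOn b) himg
    _ = Δ.choose #T := by simp

end PrefixSum

def intL1Ball (ι : Type*) [Fintype ι] (Δ : ℕ) : Set (ι → ℤ) := {d | ∑ i, |d i| ≤ Δ}

theorem finite_setOf_sum_le (Δ : ℕ) : {a : ι → ℕ | ∑ i, a i ≤ Δ}.Finite :=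
  (Set.Finite.pi fun _ => Set.finite_Iic Δ).subset fun _ ha i _ =>
    (single_le_sum (fun _ _ => Nat.zero_le _) (mem_univ i)).trans ha

theorem finite_intL1Ball (Δ : ℕ) : (intL1Ball ι Δ).Finite :=
  (Set.Finite.pi fun _ => Set.finite_Icc (-Δ : ℤ) Δ).subset fun d hd i _ =>
    abs_le.1 ((single_le_sum (fun j _ => abs_nonneg (d j)) (mem_univ i)).trans hd)

theorem sum_piFinset_sign_pow_card_ne_zero [DecidableEq ι] {R : Type*} [CommSemiring R] (x : R) :
    ∑ σ ∈ Fintype.piFinset fun _ : ι => ({-1, 0, 1} : Finset ℤ), x ^ #{i | σ i ≠ 0} =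
      (1 + 2 * x) ^ Fintype.card ι := by
  have hpow (σ : ι → ℤ) : x ^ #{i | σ i ≠ 0} = ∏ i, if σ i ≠ 0 then x else 1 := by
    rw [prod_ite, prod_const, prod_const_one, mul_one]
  simp_rw [hpow]
  rw [← prod_univ_sum (fun _ => ({-1, 0, 1} : Finset ℤ)) (fun _ v => if v ≠ 0 then x else 1),
    prod_const, card_univ]
  congr 1
  norm_num
  ring

theorem Nat.add_choose_le_add_choose (M : ℕ) {k Δ : ℕ} (h : k ≤ Δ) :
    (M + k).choose k ≤ (M + Δ).choose Δ := by
  rw [← Nat.choose_symm_add, ← Nat.choose_symm_add]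
  exact Nat.choose_le_choose M (by omega)

theorem Nat.choose_mul_pow_le_add_choose_mul_pow (M k Δ : ℕ) :
    Δ.choose k * (M + 1) ^ k ≤ (M + Δ).choose Δ * Δ ^ k := by
  rcases lt_or_ge Δ k with hk | hk
  · simp [Nat.choose_eq_zero_of_lt hk]
  refine Nat.le_of_mul_le_mul_right ?_ k.factorial_pos
  calc Δ.choose k * (M + 1) ^ k * k.factorial = Δ.descFactorial k * (M + 1) ^ k := by
        rw [Nat.descFactorial_eq_factorial_mul_choose]; ring
    _ ≤ Δ ^ k * (M + 1).ascFactorial k :=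
        Nat.mul_le_mul (Nat.descFactorial_le_pow _ _) (Nat.pow_succ_le_ascFactorial _ _)
    _ = (M + k).choose k * Δ ^ k * k.factorial := by
        rw [Nat.ascFactorial_eq_factorial_mul_choose', Nat.add_right_comm, Nat.add_sub_cancel]; ring
    _ ≤ (M + Δ).choose Δ * Δ ^ k * k.factorial := by
        gcongr
        exact Nat.add_choose_le_add_choose M hk

theorem ncard_intL1Ball_sign_fiber_le [LinearOrder ι] (Δ : ℕ) (σ : ι → ℤ) :
    {d ∈ intL1Ball ι Δ | (fun i => (d i).sign) = σ}.ncard ≤ Δ.choose #{i | σ i ≠ 0} := by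
  refine (Set.ncard_le_ncard_of_injOn (fun d i => (d i).natAbs) ?_ ?_
    ((finite_setOf_sum_le Δ).subset fun _ h => h.2)).trans (ncard_support_eq_sum_le_le_choose _ Δ)
  · rintro d ⟨hd, rfl⟩
    refine ⟨?_, ?_⟩
    · ext i
      simp
    · have : ((∑ i, (d i).natAbs : ℕ) : ℤ) ≤ Δ := by
        push_cast [Int.natCast_natAbs]
        exact hd
      exact_mod_cast this
  · rintro d ⟨-, hd⟩ e ⟨-, he⟩ h
    funext i
    rw [← Int.sign_mul_natAbs (d i), ← Int.sign_mul_natAbs (e i), congrFun (hd.trans he.symm) i,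
      show (d i).natAbs = (e i).natAbs from congrFun h i]

theorem intL1Ball_eq_biUnion_sign_fiber [DecidableEq ι] (Δ : ℕ) :
    intL1Ball ι Δ = ⋃ σ ∈ Fintype.piFinset fun _ : ι => ({-1, 0, 1} : Finset ℤ),
      {d ∈ intL1Ball ι Δ | (fun i => (d i).sign) = σ} := by
  ext d
  simp only [Set.mem_iUnion, Set.mem_sep_iff, exists_prop]
  refine ⟨fun hd => ⟨_, ?_, hd, rfl⟩, fun ⟨_, _, hd, _⟩ => hd⟩
  simp only [Fintype.mem_piFinset]
  intro i
  rcases Int.sign_trichotomy (d i) with h | h | h <;> simp [h]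

theorem ncard_intL1Ball_le_sum_choose [LinearOrder ι] [DecidableEq ι] (Δ : ℕ) :
    (intL1Ball ι Δ).ncard ≤
      ∑ σ ∈ Fintype.piFinset fun _ : ι => ({-1, 0, 1} : Finset ℤ), Δ.choose #{i | σ i ≠ 0} := by
  rw [intL1Ball_eq_biUnion_sign_fiber]
  exact (set_ncard_biUnion_le _ _).trans
    (sum_le_sum fun σ _ => ncard_intL1Ball_sign_fiber_le Δ σ)

theorem ncard_intL1Ball_le [LinearOrder ι] [DecidableEq ι] [Nonempty ι] (Δ : ℕ) :
    ((intL1Ball ι Δ).ncard : ℝ) ≤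
      ((Fintype.card ι + Δ - 1).choose Δ : ℝ) *
        (1 + 2 * (Δ : ℝ) / Fintype.card ι) ^ Fintype.card ι := by
  obtain ⟨M, hM⟩ : ∃ M, Fintype.card ι = M + 1 := Nat.exists_eq_add_one.2 Fintype.card_pos
  have hchoose (k : ℕ) : (Δ.choose k : ℝ) ≤ ((M + Δ).choose Δ : ℝ) * ((Δ : ℝ) / (M + 1)) ^ k := by
    rw [div_pow, ← mul_div_assoc, le_div_iff₀ (by positivity)]
    exact_mod_cast Nat.choose_mul_pow_le_add_choose_mul_pow M k Δ
  calc ((intL1Ball ι Δ).ncard : ℝ)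
      ≤ ∑ σ ∈ Fintype.piFinset fun _ : ι => ({-1, 0, 1} : Finset ℤ),
          (Δ.choose #{i | σ i ≠ 0} : ℝ) := by exact_mod_cast ncard_intL1Ball_le_sum_choose Δ
    _ ≤ ∑ σ ∈ Fintype.piFinset fun _ : ι => ({-1, 0, 1} : Finset ℤ),
          ((M + Δ).choose Δ : ℝ) * ((Δ : ℝ) / (M + 1)) ^ #{i | σ i ≠ 0} :=
        sum_le_sum fun σ _ => hchoose _
    _ = _ := by
        rw [← mul_sum, sum_piFinset_sign_pow_card_ne_zero, hM, Nat.add_right_comm,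
          Nat.add_sub_cancel, mul_div_assoc]
        push_cast
        ring

def perturbationSet (s : ι → ℕ) (Δ : ℕ) : Set (ι → ℕ) := {t | ∑ i, |(t i : ℤ) - s i| ≤ Δ}

theorem perturbationSet_eq_preimage (s : ι → ℕ) (Δ : ℕ) :
    perturbationSet s Δ = (fun t i => (t i : ℤ) - s i) ⁻¹' intL1Ball ι Δ :=
  rfl

theorem finite_perturbationSet (s : ι → ℕ) (Δ : ℕ) : (perturbationSet s Δ).Finite := by
  rw [perturbationSet_eq_preimage]
  exact (finite_intL1Ball Δ).preimage (injective_sub_natCast s).injOn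

theorem ncard_perturbationSet_le (s : ι → ℕ) (Δ : ℕ) :
    (perturbationSet s Δ).ncard ≤ (intL1Ball ι Δ).ncard := by
  rw [perturbationSet_eq_preimage]
  exact Set.ncard_le_ncard_of_injOn _ (fun _ h => h) (injective_sub_natCast s).injOn
    (finite_intL1Ball Δ)

/-- For spike times `s : Fin N → ℕ`, the temporal `Δ`-perturbation set
`ε(s, Δ) = {s̃ | ∑ n, |s̃ n − s n| ≤ Δ}` is finite, with cardinality at most
`C(N + Δ − 1, Δ) · (1 + 2Δ/N)^N` (as a real number) — a bound independent of
the number of time steps `T`. -/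
theorem stmt_10 (N : ℕ) (hN : 0 < N) (Δ : ℕ) (s : Fin N → ℕ) :
    {t : Fin N → ℕ | ∑ n, |(t n : ℤ) - (s n : ℤ)| ≤ (Δ : ℤ)}.Finite ∧
      ({t : Fin N → ℕ | ∑ n, |(t n : ℤ) - (s n : ℤ)| ≤ (Δ : ℤ)}.ncard : ℝ) ≤
        ((N + Δ - 1).choose Δ : ℝ) * (1 + 2 * (Δ : ℝ) / N) ^ N := by
  have : Nonempty (Fin N) := ⟨⟨0, hN⟩⟩
  change (perturbationSet s Δ).Finite ∧ ((perturbationSet s Δ).ncard : ℝ) ≤ _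
  refine ⟨finite_perturbationSet s Δ, ?_⟩
  calc ((perturbationSet s Δ).ncard : ℝ) ≤ (intL1Ball (Fin N) Δ).ncard := by
        exact_mod_cast ncard_perturbationSet_le s Δ
    _ ≤ _ := by simpa using ncard_intL1Ball_le (ι := Fin N) Δ
end
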